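/- If f̄_1,...,f̄_k ∈ K[S_M] is a regular sequence, then for each i ≤ k, the homogenization χ^{-1}(f̄_i) is a nonzerodivisor in K[S_M^h]/χ^{-1}(⟨f̄_1,...,f̄_{i-1}⟩). -/

import Mathlib

/-- The affine degree with respect to the generators `g : Fin m → ℤⁿ` of `S_M`. -/
noncomputable def deltaA {n m : ℕ} (g : Fin m → (Fin n → ℤ)) (s : Fin n → ℤ) : ℕ :=
  sInf {d | ∃ f : Fin d → Fin m, ∑ i, g (f i) = s}

/-- The affine semigroup `S_M ⊆ ℤⁿ`. -/
def affSemigroup {n m : ℕ} (g : Fin m → (Fin n → ℤ)) : AddSubmonoid (Fin n → ℤ) :=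
  AddSubmonoid.closure (insert (0 : Fin n → ℤ) {x | ∃ i, x = g i})

/-- The homogenization semigroup `S_M^h ⊆ ℤⁿ × ℤ`. -/
def homSemigroup {n m : ℕ} (g : Fin m → (Fin n → ℤ)) :
    AddSubmonoid ((Fin n → ℤ) × ℤ) :=
  AddSubmonoid.closure (insert ((0 : Fin n → ℤ), (1 : ℤ)) {x | ∃ i, x = (g i, 1)})

/-- The affine degree of a polynomial in `K[S_M]`. -/
noncomputable def affDeg {K : Type*} [Field K] {n m : ℕ} (g : Fin m → (Fin n → ℤ))
    (f : AddMonoidAlgebra K (affSemigroup g)) : ℕ :=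
  f.coeff.support.sup (fun s => deltaA g (s : Fin n → ℤ))


/-! Grade `K[S_M^h]` by the last coordinate. A homogeneous `b` of degree `e` is determined by
its dehomogenization, since `χ` is injective on the exponents of degree `e`; hence
`b = t ^ (e - affDeg (χ b)) * H (χ b)` with `t = (0, 1)`, and `b ∈ ⟨H(J)⟩` as soon as `χ b ∈ J`.
The ideal `⟨H(J)⟩` is generated by homogeneous elements, so if `a * H(f̄ᵢ)` lies in it, so
does `a_d * H(f̄ᵢ)` for every homogeneous component `a_d` of `a`. Dehomogenizing,
`χ(a_d) * f̄ᵢ ∈ J`, so `χ(a_d) ∈ J` by regularity, hence every `a_d`, and thus `a`, lies in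
`⟨H(J)⟩`. -/

open AddMonoidAlgebra DirectSum

section Semigroup

variable {n m : ℕ} (g : Fin m → (Fin n → ℤ))

lemma exists_sum_eq_fst_of_mem_homSemigroup {x : (Fin n → ℤ) × ℤ} (hx : x ∈ homSemigroup g) :
    ∃ e : ℕ, (e : ℤ) ≤ x.2 ∧ ∃ f : Fin e → Fin m, ∑ i, g (f i) = x.1 := by
  induction hx using AddSubmonoid.closure_induction with
  | mem x hx =>
    rcases hx with rfl | ⟨i, rfl⟩
    · exact ⟨0, zero_le_one, Fin.elim0, by simp⟩
    · exact ⟨1, le_rfl, fun _ => i, by simp⟩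
  | zero => exact ⟨0, le_rfl, Fin.elim0, by simp⟩
  | add x y _ _ ihx ihy =>
    obtain ⟨e₁, he₁, f₁, hf₁⟩ := ihx
    obtain ⟨e₂, he₂, f₂, hf₂⟩ := ihy
    refine ⟨e₁ + e₂, by simp only [Prod.snd_add]; omega, Fin.append f₁ f₂, ?_⟩
    simp [Fin.sum_univ_add, hf₁, hf₂]

lemma deltaA_le_of_mem_homSemigroup {x : (Fin n → ℤ) × ℤ} (hx : x ∈ homSemigroup g) :
    (deltaA g x.1 : ℤ) ≤ x.2 := by
  obtain ⟨e, he, f, hf⟩ := exists_sum_eq_fst_of_mem_homSemigroup g hx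
  have : deltaA g x.1 ≤ e := Nat.sInf_le ⟨f, hf⟩
  omega

def homDegree : homSemigroup g →+ ℤ :=
  (AddMonoidHom.snd (Fin n → ℤ) ℤ).comp (homSemigroup g).subtype

lemma homDegree_nonneg (x : homSemigroup g) : 0 ≤ homDegree g x :=
  (Int.natCast_nonneg _).trans (deltaA_le_of_mem_homSemigroup g x.2)

def homVar : homSemigroup g :=
  ⟨((0 : Fin n → ℤ), (1 : ℤ)), AddSubmonoid.subset_closure (Set.mem_insert _ _)⟩

end Semigroup

theorem AddMonoidAlgebra.mapDomain_injOn_gradeBy {R M N ι : Type*} [CommSemiring R]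
    {f : M → N} {deg : M → ι} {i : ι} (hf : Set.InjOn f (deg ⁻¹' {i})) :
    Set.InjOn (mapDomain f : R[M] → R[N]) (gradeBy R deg i) := fun _ hb _ hc h =>
  coeff_injective <| Finsupp.mapDomain_injOn _ hf hb hc (congrArg coeff h)

section Homogenization

variable {K : Type*} [Field K] {n m : ℕ} {g : Fin m → (Fin n → ℤ)}

def IsDehomogenization (χm : homSemigroup g →+ affSemigroup g) : Prop :=
  ∀ a : homSemigroup g, (χm a : Fin n → ℤ) = (a : (Fin n → ℤ) × ℤ).1

def IsHomogenization (χm : homSemigroup g →+ affSemigroup g)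
    (H : AddMonoidAlgebra K (affSemigroup g) → AddMonoidAlgebra K (homSemigroup g)) : Prop :=
  ∀ f, mapDomainRingHom K χm (H f) = f ∧
    ∀ a ∈ (H f).coeff.support, (a : (Fin n → ℤ) × ℤ).2 = (affDeg g f : ℤ)

variable {χm : homSemigroup g →+ affSemigroup g}
  {H : AddMonoidAlgebra K (affSemigroup g) → AddMonoidAlgebra K (homSemigroup g)}

lemma IsDehomogenization.injOn_homDegree_fiber (hχ : IsDehomogenization χm) (d : ℤ) :
    Set.InjOn χm (homDegree g ⁻¹' {d}) := fun x hx y hy hxy =>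
  Subtype.ext <| Prod.ext (by rw [← hχ x, ← hχ y, hxy]) (hx.trans hy.symm)

lemma IsDehomogenization.map_homVar (hχ : IsDehomogenization χm) : χm (homVar g) = 0 :=
  Subtype.ext (hχ _)

lemma IsDehomogenization.affDeg_mapDomain_le (hχ : IsDehomogenization χm)
    {e : ℕ} {b : AddMonoidAlgebra K (homSemigroup g)} (hb : b ∈ gradeBy K (homDegree g) e) :
    affDeg g (mapDomainRingHom K χm b) ≤ e := by
  classical
  refine Finset.sup_le fun s hs => ?_
  obtain ⟨y, hy, rfl⟩ := Finset.mem_image.mp (Finsupp.mapDomain_support hs)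
  have hdeg : (deltaA g (χm y : Fin n → ℤ) : ℤ) ≤ homDegree g y := by
    rw [hχ y]; exact deltaA_le_of_mem_homSemigroup g y.2
  rw [hb y hy] at hdeg
  exact_mod_cast hdeg

lemma IsHomogenization.mem_gradeBy (hH : IsHomogenization χm H)
    (f : AddMonoidAlgebra K (affSemigroup g)) : H f ∈ gradeBy K (homDegree g) (affDeg g f) :=
  (hH f).2

lemma IsHomogenization.eq_homVar_pow_mul (hH : IsHomogenization χm H)
    (hχ : IsDehomogenization χm)
    {e : ℕ} {b : AddMonoidAlgebra K (homSemigroup g)} (hb : b ∈ gradeBy K (homDegree g) e) :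
    b = single (homVar g) 1 ^ (e - affDeg g (mapDomainRingHom K χm b)) *
      H (mapDomainRingHom K χm b) := by
  set f := mapDomainRingHom K χm b
  have hmem : single (homVar g) 1 ^ (e - affDeg g f) * H f ∈ gradeBy K (homDegree g) e := by
    have := SetLike.mul_mem_graded
      (SetLike.pow_mem_graded (e - affDeg g f) (single_mem_gradeBy (R := K) _ (homVar g) 1))
      (hH.mem_gradeBy f)
    convert this using 2
    have : affDeg g f ≤ e := hχ.affDeg_mapDomain_le hb
    change (e : ℤ) = ((e - affDeg g f : ℕ) : ℤ) * 1 + affDeg g f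
    omega
  refine mapDomain_injOn_gradeBy (hχ.injOn_homDegree_fiber e) hb hmem ?_
  have hvar : mapDomainRingHom K χm (single (homVar g) 1) = 1 := by
    rw [mapDomainRingHom_apply, mapDomain_single, hχ.map_homVar, AddMonoidAlgebra.one_def]
  change mapDomainRingHom K χm b = mapDomainRingHom K χm (_ * _)
  rw [map_mul, map_pow, hvar, one_pow, one_mul, (hH f).1]

lemma IsHomogenization.mem_span_image_of_mem_gradeBy (hH : IsHomogenization χm H)
    (hχ : IsDehomogenization χm) {s : Set (AddMonoidAlgebra K (affSemigroup g))} {d : ℤ}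
    {b : AddMonoidAlgebra K (homSemigroup g)} (hb : b ∈ gradeBy K (homDegree g) d)
    (hbs : mapDomainRingHom K χm b ∈ s) : b ∈ Ideal.span (H '' s) := by
  obtain rfl | hb0 := eq_or_ne b 0
  · exact zero_mem _
  obtain ⟨x, hx⟩ : b.coeff.support.Nonempty :=
    Finsupp.support_nonempty_iff.mpr (by simpa using hb0)
  lift d to ℕ using hb x hx ▸ homDegree_nonneg g x
  rw [hH.eq_homVar_pow_mul hχ hb]
  exact Ideal.mul_mem_left _ _ (Ideal.subset_span ⟨_, hbs, rfl⟩)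

lemma IsHomogenization.span_image_le_comap (hH : IsHomogenization χm H)
    (J : Ideal (AddMonoidAlgebra K (affSemigroup g))) :
    Ideal.span (H '' J) ≤ J.comap (mapDomainRingHom K χm) :=
  Ideal.span_le.mpr <| by
    rintro _ ⟨f, hf, rfl⟩
    simpa only [SetLike.mem_coe, Ideal.mem_comap, (hH f).1] using hf

lemma IsHomogenization.isHomogeneous_span_image (hH : IsHomogenization χm H)
    (s : Set (AddMonoidAlgebra K (affSemigroup g))) :
    (Ideal.span (H '' s)).IsHomogeneous (gradeBy K (homDegree g)) :=
  Ideal.homogeneous_span _ _ <| by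
    rintro _ ⟨f, -, rfl⟩
    exact ⟨_, hH.mem_gradeBy f⟩

end Homogenization

/-- If `f̄₁,…,f̄_k ∈ K[S_M]` is a regular sequence (each element a
nonzerodivisor modulo the ideal of the previous ones), then for each `i ≤ k`
the homogenization `χ⁻¹(f̄_i)` is a nonzerodivisor in
`K[S_M^h] / χ⁻¹(⟨f̄₁,…,f̄_{i-1}⟩)`, where `χ⁻¹(J)` denotes the ideal generated
by the homogenizations of all the elements of `J`.  The homogenization `H` is
characterized by `χ(H f) = f` and homogeneity of `H f` in degree `δ^A(f)`. -/
theorem homogenization_nonzerodivisor {K : Type*} [Field K] {n m k : ℕ}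
    (g : Fin m → (Fin n → ℤ))
    (χm : homSemigroup g →+ affSemigroup g)
    (hχ : ∀ a : homSemigroup g,
      ((χm a : Fin n → ℤ)) = (a : (Fin n → ℤ) × ℤ).1)
    (H : AddMonoidAlgebra K (affSemigroup g) → AddMonoidAlgebra K (homSemigroup g))
    (hH : ∀ f, AddMonoidAlgebra.mapDomainRingHom K χm (H f) = f ∧
      ∀ a ∈ (H f).coeff.support, (a : (Fin n → ℤ) × ℤ).2 = (affDeg g f : ℤ))
    (fbar : Fin k → AddMonoidAlgebra K (affSemigroup g))
    (hreg : ∀ i : Fin k, ∀ a : AddMonoidAlgebra K (affSemigroup g),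
      a * fbar i ∈ Ideal.span (fbar '' {j | j < i}) →
      a ∈ Ideal.span (fbar '' {j | j < i})) :
    ∀ i : Fin k, ∀ a : AddMonoidAlgebra K (homSemigroup g),
      a * H (fbar i) ∈
        Ideal.span (H '' (Ideal.span (fbar '' {j | j < i}) :
          Set (AddMonoidAlgebra K (affSemigroup g)))) →
      a ∈ Ideal.span (H '' (Ideal.span (fbar '' {j | j < i}) :
        Set (AddMonoidAlgebra K (affSemigroup g)))) := by
  intro i a ha
  set J := Ideal.span (fbar '' {j | j < i})
  have hI := IsHomogenization.isHomogeneous_span_image hH J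
  refine hI.mem_iff.mpr fun d => ?_
  set a_d : AddMonoidAlgebra K (homSemigroup g) :=
    ↑(decompose (gradeBy K (homDegree g)) a d)
  have h_mul : a_d * H (fbar i) ∈ Ideal.span (H '' J) := by
    rw [← coe_decompose_mul_add_of_right_mem _ (IsHomogenization.mem_gradeBy hH (fbar i))]
    exact hI.mem_iff.mp ha _
  have h_map : mapDomainRingHom K χm a_d * fbar i ∈ J := by
    simpa only [Ideal.mem_comap, map_mul, (hH _).1] using
      IsHomogenization.span_image_le_comap hH J h_mul
  exact IsHomogenization.mem_span_image_of_mem_gradeBy hH hχ (decompose _ a d).2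
    (hreg i _ h_map)
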